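/- arXiv:2210.01899 — 2 statements merged into one kernel-verified Lean document; each statement's English description precedes it below -/
import Mathlib

section
/- Let λ, μ, ω, h ∈ ℝ with μ > 0, λ + 2μ > 0, h > 0. (i) For all C² functions Y = (Y₁, Y₂), Ỹ = (Ỹ₁, Ỹ₂) : [−h,h] → ℂ² satisfying B₂(Y)(±h) = B₂(Ỹ)(±h) = 0, one has ⟨F(Y), Ỹ⟩ = ⟨Y, F(Ỹ)⟩. (ii) For all C¹ functions X = (X₁, X₂), X̃ = (X̃₁, X̃₂) : [−h,h] → ℂ² satisfying B₁(X)(±h) = B₁(X̃)(±h) = 0, one has ⟨G(X), X̃⟩ = ⟨X, G(X̃)⟩. In other words, the operators F and G are self-adjoint with respect to the bilinear pairing ⟨·,·⟩ on functions satisfying the respective boundary conditions. -/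
/-!
Both identities are Lagrange identities: the pointwise defect `F(Y)·Ỹ - Y·F(Ỹ)` is the derivative of
the bilinear concomitant `c (Y₁Ỹ₂ - Y₂Ỹ₁) - d (Y₂′Ỹ₂ - Y₂Ỹ₂′)` (with `c = λ/(λ+2μ)`,
`d = 4μ(λ+μ)/(λ+2μ)`), which equals `Y₂ B₂(Ỹ) - Ỹ₂ B₂(Y)` and hence vanishes at `±h`; likewise
`G(X)·X̃ - X·G(X̃)` is the derivative of `X₂X̃₁ - X₁X̃₂`, which vanishes where `B₁(X) = B₁(X̃) = 0`.
The zeroth-order terms are symmetric and cancel.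
-/

open Set intervalIntegral

theorem intervalIntegral.integral_eq_integral_of_hasDerivAt_sub
    {E : Type*} [NormedAddCommGroup E] [NormedSpace ℝ E] [CompleteSpace E]
    {a b : ℝ} {f g P : ℝ → E}
    (hf : IntervalIntegrable f MeasureTheory.volume a b)
    (hg : IntervalIntegrable g MeasureTheory.volume a b)
    (hP : ∀ x ∈ uIcc a b, HasDerivAt P (f x - g x) x) (hPab : P a = P b) :
    ∫ x in a..b, f x = ∫ x in a..b, g x := by
  have h := integral_eq_sub_of_hasDerivAt hP (hf.sub hg)
  rwa [integral_sub hf hg, hPab, sub_self, sub_eq_zero] at h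

theorem ContDiff.hasDerivAt_deriv {𝕜 E : Type*} [NontriviallyNormedField 𝕜]
    [NormedAddCommGroup E] [NormedSpace 𝕜 E] {f : 𝕜 → E} (hf : ContDiff 𝕜 1 f) (x : 𝕜) :
    HasDerivAt f (deriv f x) x :=
  (hf.differentiable one_ne_zero x).hasDerivAt

theorem G_selfadjoint_on (k m : ℂ) {a b : ℝ} {X1 X2 W1 W2 : ℝ → ℂ}
    (hX1 : ContDiff ℝ 1 X1) (hX2 : ContDiff ℝ 1 X2)
    (hW1 : ContDiff ℝ 1 W1) (hW2 : ContDiff ℝ 1 W2)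
    (hXa : X2 a = 0) (hXb : X2 b = 0) (hWa : W2 a = 0) (hWb : W2 b = 0) :
    ∫ z in a..b, ((k * X1 z + deriv X2 z) * W1 z + (-(deriv X1 z) + X2 z / m) * W2 z)
      = ∫ z in a..b, (X1 z * (k * W1 z + deriv W2 z) + X2 z * (-(deriv W1 z) + W2 z / m)) := by
  have := hX1.continuous; have := hX2.continuous
  have := hW1.continuous; have := hW2.continuous
  have := hX1.continuous_deriv le_rfl; have := hX2.continuous_deriv le_rfl
  have := hW1.continuous_deriv le_rfl; have := hW2.continuous_deriv le_rfl
  refine integral_eq_integral_of_hasDerivAt_sub (P := fun z => X2 z * W1 z - X1 z * W2 z)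
    (Continuous.intervalIntegrable (by fun_prop) a b)
    (Continuous.intervalIntegrable (by fun_prop) a b) (fun z _ => ?_)
    (by simp [hXa, hXb, hWa, hWb])
  exact (((hX2.hasDerivAt_deriv z).mul (hW1.hasDerivAt_deriv z)).sub
    ((hX1.hasDerivAt_deriv z).mul (hW2.hasDerivAt_deriv z))).congr_deriv (by ring)

theorem F_selfadjoint_on (p c κ d : ℂ) {a b : ℝ} {Y1 Y2 Z1 Z2 : ℝ → ℂ}
    (hY1 : ContDiff ℝ 1 Y1) (hY2 : ContDiff ℝ 2 Y2)
    (hZ1 : ContDiff ℝ 1 Z1) (hZ2 : ContDiff ℝ 2 Z2)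
    (hYa : -c * Y1 a + d * deriv Y2 a = 0) (hYb : -c * Y1 b + d * deriv Y2 b = 0)
    (hZa : -c * Z1 a + d * deriv Z2 a = 0) (hZb : -c * Z1 b + d * deriv Z2 b = 0) :
    ∫ z in a..b, ((-(Y1 z) / p - c * deriv Y2 z) * Z1 z
        + (c * deriv Y1 z - κ * Y2 z - d * deriv (deriv Y2) z) * Z2 z)
      = ∫ z in a..b, (Y1 z * (-(Z1 z) / p - c * deriv Z2 z)
        + Y2 z * (c * deriv Z1 z - κ * Z2 z - d * deriv (deriv Z2) z)) := by
  have hY2' : ContDiff ℝ 1 (deriv Y2) := hY2.deriv' (n := 1)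
  have hZ2' : ContDiff ℝ 1 (deriv Z2) := hZ2.deriv' (n := 1)
  have hY2₁ : ContDiff ℝ 1 Y2 := hY2.of_le one_le_two
  have hZ2₁ : ContDiff ℝ 1 Z2 := hZ2.of_le one_le_two
  have := hY1.continuous; have := hY2.continuous; have := hZ1.continuous; have := hZ2.continuous
  have := hY1.continuous_deriv le_rfl; have := hY2'.continuous; have := hY2'.continuous_deriv le_rfl
  have := hZ1.continuous_deriv le_rfl; have := hZ2'.continuous; have := hZ2'.continuous_deriv le_rfl
  set P : ℝ → ℂ := fun z =>
    c * (Y1 z * Z2 z - Y2 z * Z1 z) - d * (deriv Y2 z * Z2 z - Y2 z * deriv Z2 z)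
  have hP_eq : ∀ z, P z = Y2 z * (-c * Z1 z + d * deriv Z2 z)
      - Z2 z * (-c * Y1 z + d * deriv Y2 z) := fun z => by ring
  refine integral_eq_integral_of_hasDerivAt_sub (P := P)
    (Continuous.intervalIntegrable (by fun_prop) a b)
    (Continuous.intervalIntegrable (by fun_prop) a b) (fun z _ => ?_)
    (by rw [hP_eq, hP_eq, hYa, hYb, hZa, hZb]; ring)
  exact ((((hY1.hasDerivAt_deriv z).mul (hZ2₁.hasDerivAt_deriv z)).sub
      ((hY2₁.hasDerivAt_deriv z).mul (hZ1.hasDerivAt_deriv z))).const_mul c |>.sub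
    ((((hY2'.hasDerivAt_deriv z).mul (hZ2₁.hasDerivAt_deriv z)).sub
      ((hY2₁.hasDerivAt_deriv z).mul (hZ2'.hasDerivAt_deriv z))).const_mul d)).congr_deriv (by ring)

theorem F_G_selfadjoint_general
    (lam mu om h0 : ℝ) :
    (∀ Y1 Y2 Z1 Z2 : ℝ → ℂ,
      ContDiff ℝ 2 Y1 → ContDiff ℝ 2 Y2 → ContDiff ℝ 2 Z1 → ContDiff ℝ 2 Z2 →
      (-((lam:ℂ)/((lam:ℂ)+2*(mu:ℂ))) * Y1 h0
          + ((4*(mu:ℂ)*((lam:ℂ)+(mu:ℂ)))/((lam:ℂ)+2*(mu:ℂ))) * deriv Y2 h0 = 0) →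
      (-((lam:ℂ)/((lam:ℂ)+2*(mu:ℂ))) * Y1 (-h0)
          + ((4*(mu:ℂ)*((lam:ℂ)+(mu:ℂ)))/((lam:ℂ)+2*(mu:ℂ))) * deriv Y2 (-h0) = 0) →
      (-((lam:ℂ)/((lam:ℂ)+2*(mu:ℂ))) * Z1 h0
          + ((4*(mu:ℂ)*((lam:ℂ)+(mu:ℂ)))/((lam:ℂ)+2*(mu:ℂ))) * deriv Z2 h0 = 0) →
      (-((lam:ℂ)/((lam:ℂ)+2*(mu:ℂ))) * Z1 (-h0)
          + ((4*(mu:ℂ)*((lam:ℂ)+(mu:ℂ)))/((lam:ℂ)+2*(mu:ℂ))) * deriv Z2 (-h0) = 0) →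
      (∫ z in (-h0)..h0,
          ((-(Y1 z)/((lam:ℂ)+2*(mu:ℂ)) - ((lam:ℂ)/((lam:ℂ)+2*(mu:ℂ))) * deriv Y2 z) * Z1 z
          + (((lam:ℂ)/((lam:ℂ)+2*(mu:ℂ))) * deriv Y1 z - (om:ℂ)^2 * Y2 z
              - ((4*(mu:ℂ)*((lam:ℂ)+(mu:ℂ)))/((lam:ℂ)+2*(mu:ℂ))) * deriv (deriv Y2) z)
            * Z2 z))
        = ∫ z in (-h0)..h0,
            (Y1 z * (-(Z1 z)/((lam:ℂ)+2*(mu:ℂ))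
                - ((lam:ℂ)/((lam:ℂ)+2*(mu:ℂ))) * deriv Z2 z)
            + Y2 z * (((lam:ℂ)/((lam:ℂ)+2*(mu:ℂ))) * deriv Z1 z - (om:ℂ)^2 * Z2 z
                - ((4*(mu:ℂ)*((lam:ℂ)+(mu:ℂ)))/((lam:ℂ)+2*(mu:ℂ))) * deriv (deriv Z2) z)))
    ∧ (∀ X1 X2 W1 W2 : ℝ → ℂ,
      ContDiff ℝ 1 X1 → ContDiff ℝ 1 X2 → ContDiff ℝ 1 W1 → ContDiff ℝ 1 W2 →
      X2 h0 = 0 → X2 (-h0) = 0 → W2 h0 = 0 → W2 (-h0) = 0 →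
      (∫ z in (-h0)..h0,
          (((om:ℂ)^2 * X1 z + deriv X2 z) * W1 z
            + (-(deriv X1 z) + X2 z/(mu:ℂ)) * W2 z))
        = ∫ z in (-h0)..h0,
            (X1 z * ((om:ℂ)^2 * W1 z + deriv W2 z)
              + X2 z * (-(deriv W1 z) + W2 z/(mu:ℂ)))) := by
  refine ⟨fun Y1 Y2 Z1 Z2 hY1 hY2 hZ1 hZ2 hYb hYa hZb hZa => ?_,
    fun X1 X2 W1 W2 hX1 hX2 hW1 hW2 hXb hXa hWb hWa => ?_⟩
  · exact F_selfadjoint_on _ _ _ _ (hY1.of_le one_le_two) hY2 (hZ1.of_le one_le_two) hZ2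
      hYa hYb hZa hZb
  · exact G_selfadjoint_on _ _ hX1 hX2 hW1 hW2 hXa hXb hWa hWb

/-- **Self-adjointness of `F` and `G` for the bilinear pairing.**
(i) For C² pairs `Y = (Y₁,Y₂)`, `Ỹ = (Ỹ₁,Ỹ₂)` with `B₂(Y)(±h0) = B₂(Ỹ)(±h0) = 0`,
one has `⟨F(Y), Ỹ⟩ = ⟨Y, F(Ỹ)⟩`.
(ii) For C¹ pairs `X = (X₁,X₂)`, `X̃ = (X̃₁,X̃₂)` with `B₁(X)(±h0) = B₁(X̃)(±h0) = 0`,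
one has `⟨G(X), X̃⟩ = ⟨X, G(X̃)⟩`. -/
theorem F_G_selfadjoint
    (lam mu om h0 : ℝ) (hmu : 0 < mu) (hlm : 0 < lam + 2*mu) (hh : 0 < h0) :
    (∀ Y1 Y2 Z1 Z2 : ℝ → ℂ,
      ContDiff ℝ 2 Y1 → ContDiff ℝ 2 Y2 → ContDiff ℝ 2 Z1 → ContDiff ℝ 2 Z2 →
      (-((lam:ℂ)/((lam:ℂ)+2*(mu:ℂ))) * Y1 h0
          + ((4*(mu:ℂ)*((lam:ℂ)+(mu:ℂ)))/((lam:ℂ)+2*(mu:ℂ))) * deriv Y2 h0 = 0) →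
      (-((lam:ℂ)/((lam:ℂ)+2*(mu:ℂ))) * Y1 (-h0)
          + ((4*(mu:ℂ)*((lam:ℂ)+(mu:ℂ)))/((lam:ℂ)+2*(mu:ℂ))) * deriv Y2 (-h0) = 0) →
      (-((lam:ℂ)/((lam:ℂ)+2*(mu:ℂ))) * Z1 h0
          + ((4*(mu:ℂ)*((lam:ℂ)+(mu:ℂ)))/((lam:ℂ)+2*(mu:ℂ))) * deriv Z2 h0 = 0) →
      (-((lam:ℂ)/((lam:ℂ)+2*(mu:ℂ))) * Z1 (-h0)
          + ((4*(mu:ℂ)*((lam:ℂ)+(mu:ℂ)))/((lam:ℂ)+2*(mu:ℂ))) * deriv Z2 (-h0) = 0) →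
      (∫ z in (-h0)..h0,
          ((-(Y1 z)/((lam:ℂ)+2*(mu:ℂ)) - ((lam:ℂ)/((lam:ℂ)+2*(mu:ℂ))) * deriv Y2 z) * Z1 z
          + (((lam:ℂ)/((lam:ℂ)+2*(mu:ℂ))) * deriv Y1 z - (om:ℂ)^2 * Y2 z
              - ((4*(mu:ℂ)*((lam:ℂ)+(mu:ℂ)))/((lam:ℂ)+2*(mu:ℂ))) * deriv (deriv Y2) z)
            * Z2 z))
        = ∫ z in (-h0)..h0,
            (Y1 z * (-(Z1 z)/((lam:ℂ)+2*(mu:ℂ))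
                - ((lam:ℂ)/((lam:ℂ)+2*(mu:ℂ))) * deriv Z2 z)
            + Y2 z * (((lam:ℂ)/((lam:ℂ)+2*(mu:ℂ))) * deriv Z1 z - (om:ℂ)^2 * Z2 z
                - ((4*(mu:ℂ)*((lam:ℂ)+(mu:ℂ)))/((lam:ℂ)+2*(mu:ℂ))) * deriv (deriv Z2) z)))
    ∧ (∀ X1 X2 W1 W2 : ℝ → ℂ,
      ContDiff ℝ 1 X1 → ContDiff ℝ 1 X2 → ContDiff ℝ 1 W1 → ContDiff ℝ 1 W2 →
      X2 h0 = 0 → X2 (-h0) = 0 → W2 h0 = 0 → W2 (-h0) = 0 →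
      (∫ z in (-h0)..h0,
          (((om:ℂ)^2 * X1 z + deriv X2 z) * W1 z
            + (-(deriv X1 z) + X2 z/(mu:ℂ)) * W2 z))
        = ∫ z in (-h0)..h0,
            (X1 z * ((om:ℂ)^2 * W1 z + deriv W2 z)
              + X2 z * (-(deriv W1 z) + W2 z/(mu:ℂ)))) :=
  F_G_selfadjoint_general lam mu om h0
end

section
/- Let λ, μ, ω, h ∈ ℝ with μ > 0, λ + 2μ > 0, h > 0, and let k ∈ ℂ. Suppose (X, Y) is a pair of C² functions [−h,h] → ℂ², not both identically zero, satisfying F(Y) = ikX and G(X) = ikY on [−h,h] together with the boundary conditions B₁(X)(±h) = 0 and B₂(Y)(±h) = 0. Then for any p, q ∈ ℂ with p² = ω²/(λ+2μ) − k² and q² = ω²/μ − k², the wavenumber k satisfies the Rayleigh–Lamb equation: ( (q²−k²)² sin(qh) cos(ph) + 4k²pq sin(ph) cos(qh) ) · ( (q²−k²)² cos(qh) sin(ph) + 4k²pq cos(ph) sin(qh) ) = 0, i.e. k satisfies either the symmetric or the antisymmetric Rayleigh–Lamb equation. -/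
/-!
Eliminating `Y₁` turns the mode equations into a first-order system for `(X₁, X₂, Y₂, Y₂')`.
The potentials `Φ = (λ+2μ)(ik X₁ + Y₂')`, `φ = ik X₂ + (2μk² - ω²) Y₂`, `ψ = X₂ - 2iμk Y₂` and
`χ = ((λ+2μ)k² - ω²) X₁ - ik(λ+2μ) Y₂'` diagonalise it: `Φ' = φ`, `φ' = -p²Φ`, `ψ' = χ`,
`χ' = -q²ψ`, and for `ω ≠ 0` they determine the mode. The boundary conditions read
`-2iμk φ + (ω² - 2μk²) ψ = 0` and `(ω² - 2μk²) Φ + 2iμk χ = 0` at `±h`. Writing the potentials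
through `cos` and `sin` of `pz` and `qz`, the even and odd parts of these conditions are two
2 × 2 systems for the values of the potentials at `0`, whose determinants are `μ²` times the two
Rayleigh–Lamb factors. So if neither factor vanishes, the mode is trivial. For `ω = 0` one has
`p = ±q` with `q² = -k²`, and the first factor vanishes identically.
-/

open Complex Set

theorem eq_zero_of_linear_system {R : Type*} [CommRing R] [NoZeroDivisors R] {a b c d x y : R}
    (h₁ : a * x + b * y = 0) (h₂ : c * x + d * y = 0) (hdet : a * d - b * c ≠ 0) :
    x = 0 ∧ y = 0 := by
  have hx : (a * d - b * c) * x = 0 := by linear_combination d * h₁ - b * h₂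
  have hy : (a * d - b * c) * y = 0 := by linear_combination a * h₂ - c * h₁
  exact ⟨(mul_eq_zero.mp hx).resolve_left hdet, (mul_eq_zero.mp hy).resolve_left hdet⟩

theorem eq_of_hasDerivAt_zero_of_mem_Icc {E : Type*} [NormedAddCommGroup E] [NormedSpace ℝ E]
    {f : ℝ → E} {a b x y : ℝ} (hf : ∀ z ∈ Icc a b, HasDerivAt f 0 z)
    (hx : x ∈ Icc a b) (hy : y ∈ Icc a b) : f x = f y := by
  have := (convex_Icc a b).norm_image_sub_le_of_norm_hasDerivWithin_le
    (fun z hz => (hf z hz).hasDerivWithinAt) (fun _ _ => norm_zero.le) hy hx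
  simpa [sub_eq_zero] using this

theorem deriv_eq_deriv_of_eqOn_Icc {E : Type*} [NormedAddCommGroup E] [NormedSpace ℝ E]
    {f g : ℝ → E} {a b z : ℝ} (hab : a < b) (hf : Differentiable ℝ f) (hg : Differentiable ℝ g)
    (hfg : EqOn f g (Icc a b)) (hz : z ∈ Icc a b) : deriv f z = deriv g z := by
  have hu := uniqueDiffOn_Icc hab z hz
  rw [← (hf z).derivWithin hu, ← (hg z).derivWithin hu]
  exact derivWithin_congr hfg (hfg hz)

theorem hasDerivAt_sin_mul_ofReal (p : ℂ) (z : ℝ) :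
    HasDerivAt (fun t : ℝ => sin (p * t)) (p * cos (p * z)) z := by
  simpa [mul_comm] using (((hasDerivAt_id (z : ℂ)).const_mul p).csin).comp_ofReal

theorem hasDerivAt_cos_mul_ofReal (p : ℂ) (z : ℝ) :
    HasDerivAt (fun t : ℝ => cos (p * t)) (-p * sin (p * z)) z := by
  simpa [mul_comm] using (((hasDerivAt_id (z : ℂ)).const_mul p).ccos).comp_ofReal

structure IsHelmholtzPair (p : ℂ) (h : ℝ) (f g : ℝ → ℂ) : Prop where
  differentiable_fst : Differentiable ℝ f
  differentiable_snd : Differentiable ℝ g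
  deriv_fst : ∀ z ∈ Icc (-h) h, deriv f z = g z
  deriv_snd : ∀ z ∈ Icc (-h) h, deriv g z = -p ^ 2 * f z

namespace IsHelmholtzPair

variable {p : ℂ} {h : ℝ} {f g : ℝ → ℂ}

theorem eq_cos_sin (H : IsHelmholtzPair p h f g) (hh : 0 ≤ h) {z : ℝ} (hz : z ∈ Icc (-h) h) :
    p * f z = p * f 0 * cos (p * z) + g 0 * sin (p * z) ∧
      g z = g 0 * cos (p * z) - p * f 0 * sin (p * z) := by
  have h0 : (0 : ℝ) ∈ Icc (-h) h := ⟨by linarith, hh⟩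
  -- Wronskians of `f` with `cos (p z)` and `sin (p z)`: constant, as all three solve `y'' = -p² y`.
  have hu : ∀ t ∈ Icc (-h) h,
      HasDerivAt (fun t : ℝ => g t * cos (p * t) + p * f t * sin (p * t)) 0 t := by
    intro t ht
    refine (((H.differentiable_snd t).hasDerivAt.mul (hasDerivAt_cos_mul_ofReal p t)).add
      (((H.differentiable_fst t).hasDerivAt.const_mul p).mul
        (hasDerivAt_sin_mul_ofReal p t))).congr_deriv ?_
    rw [H.deriv_fst t ht, H.deriv_snd t ht]
    ring
  have hw : ∀ t ∈ Icc (-h) h,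
      HasDerivAt (fun t : ℝ => g t * sin (p * t) - p * f t * cos (p * t)) 0 t := by
    intro t ht
    refine (((H.differentiable_snd t).hasDerivAt.mul (hasDerivAt_sin_mul_ofReal p t)).sub
      (((H.differentiable_fst t).hasDerivAt.const_mul p).mul
        (hasDerivAt_cos_mul_ofReal p t))).congr_deriv ?_
    rw [H.deriv_fst t ht, H.deriv_snd t ht]
    ring
  have eu := eq_of_hasDerivAt_zero_of_mem_Icc hu hz h0
  have ew := eq_of_hasDerivAt_zero_of_mem_Icc hw hz h0
  simp only [ofReal_zero, mul_zero, cos_zero, sin_zero, mul_one, add_zero, zero_sub] at eu ew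
  have pyth := sin_sq_add_cos_sq (p * z)
  constructor
  · linear_combination sin (p * z) * eu - cos (p * z) * ew - p * f z * pyth
  · linear_combination cos (p * z) * eu + sin (p * z) * ew - g z * pyth

theorem eq_zero_of_eq_zero_at_zero (H : IsHelmholtzPair p h f g) (hh : 0 ≤ h) (hp : p ≠ 0)
    (hf : f 0 = 0) (hg : g 0 = 0) {z : ℝ} (hz : z ∈ Icc (-h) h) : f z = 0 ∧ g z = 0 := by
  obtain ⟨hfz, hgz⟩ := H.eq_cos_sin hh hz
  rw [hf, hg] at hfz hgz
  exact ⟨by simpa [hp] using hfz, by simpa using hgz⟩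

theorem eq_zero_of_coupled_boundary {q a b : ℂ} {f₁ g₁ f₂ g₂ : ℝ → ℂ}
    (H₁ : IsHelmholtzPair p h f₁ g₁) (H₂ : IsHelmholtzPair q h f₂ g₂) (hh : 0 ≤ h)
    (hbc : a * g₁ h + b * f₂ h = 0 ∧ b * f₁ h - a * g₂ h = 0)
    (hbc' : a * g₁ (-h) + b * f₂ (-h) = 0 ∧ b * f₁ (-h) - a * g₂ (-h) = 0)
    (hdet : (b ^ 2 * sin (q * h) * cos (p * h) - a ^ 2 * p * q * sin (p * h) * cos (q * h)) *
      (b ^ 2 * cos (q * h) * sin (p * h) - a ^ 2 * p * q * cos (p * h) * sin (q * h)) ≠ 0)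
    {z : ℝ} (hz : z ∈ Icc (-h) h) : f₁ z = 0 ∧ g₁ z = 0 ∧ f₂ z = 0 ∧ g₂ z = 0 := by
  obtain ⟨hD₁, hD₂⟩ := mul_ne_zero_iff.mp hdet
  have hp : p ≠ 0 := by rintro rfl; simp at hD₂
  have hq : q ≠ 0 := by rintro rfl; simp at hD₁
  have hpos : h ∈ Icc (-h) h := ⟨by linarith, le_rfl⟩
  have hneg : -h ∈ Icc (-h) h := ⟨le_rfl, by linarith⟩
  obtain ⟨f₁p, g₁p⟩ := H₁.eq_cos_sin hh hpos
  obtain ⟨f₁n, g₁n⟩ := H₁.eq_cos_sin hh hneg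
  obtain ⟨f₂p, g₂p⟩ := H₂.eq_cos_sin hh hpos
  obtain ⟨f₂n, g₂n⟩ := H₂.eq_cos_sin hh hneg
  simp only [ofReal_neg, mul_neg, cos_neg, sin_neg] at f₁n g₁n f₂n g₂n
  -- Even and odd parts of the boundary conditions decouple into two 2 × 2 systems.
  obtain ⟨hg₁, hf₂⟩ := eq_zero_of_linear_system (x := g₁ 0) (y := f₂ 0)
    (a := a * q * cos (p * h)) (b := b * q * cos (q * h))
    (c := b * sin (p * h)) (d := a * p * q * sin (q * h))
    (by linear_combination (q * hbc.1 + q * hbc'.1 - a * q * g₁p - a * q * g₁n - b * f₂p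
      - b * f₂n) / 2)
    (by linear_combination (p * hbc.2 - p * hbc'.2 - b * f₁p + b * f₁n + a * p * g₂p
      - a * p * g₂n) / 2)
    (by convert mul_ne_zero (neg_ne_zero.mpr hq) hD₂ using 1; ring)
  obtain ⟨hf₁, hg₂⟩ := eq_zero_of_linear_system (x := f₁ 0) (y := g₂ 0)
    (a := -a * p * q * sin (p * h)) (b := b * sin (q * h))
    (c := b * p * cos (p * h)) (d := -a * p * cos (q * h))
    (by linear_combination (q * hbc.1 - q * hbc'.1 - a * q * g₁p + a * q * g₁n - b * f₂p
      + b * f₂n) / 2)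
    (by linear_combination (p * hbc.2 + p * hbc'.2 - b * f₁p - b * f₁n + a * p * g₂p
      + a * p * g₂n) / 2)
    (by convert mul_ne_zero (neg_ne_zero.mpr hp) hD₁ using 1; ring)
  obtain ⟨hf₁z, hg₁z⟩ := H₁.eq_zero_of_eq_zero_at_zero hh hp hf₁ hg₁ hz
  obtain ⟨hf₂z, hg₂z⟩ := H₂.eq_zero_of_eq_zero_at_zero hh hq hf₂ hg₂ hz
  exact ⟨hf₁z, hg₁z, hf₂z, hg₂z⟩

end IsHelmholtzPair

structure IsReducedLambSystem (lam mu om k : ℂ) (h : ℝ) (X1 X2 Y1 Y2 : ℝ → ℂ) : Prop where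
  Y1_eq : ∀ z ∈ Icc (-h) h, Y1 z = -((lam + 2 * mu) * I * k * X1 z) - lam * deriv Y2 z
  deriv_X1 : ∀ z ∈ Icc (-h) h, mu * deriv X1 z = X2 z - I * k * mu * Y2 z
  deriv_X2 : ∀ z ∈ Icc (-h) h,
    deriv X2 z = ((lam + 2 * mu) * k ^ 2 - om ^ 2) * X1 z - I * k * lam * deriv Y2 z
  deriv_deriv_Y2 : ∀ z ∈ Icc (-h) h, (lam + 2 * mu) * mu * deriv (deriv Y2) z =
    -(I * k * (lam + mu) * X2 z) - mu * (lam * k ^ 2 + om ^ 2) * Y2 z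

noncomputable def longPot (lam mu k : ℂ) (X1 Y2 : ℝ → ℂ) (z : ℝ) : ℂ :=
  (lam + 2 * mu) * (I * k * X1 z + deriv Y2 z)

def longPotDeriv (mu om k : ℂ) (X2 Y2 : ℝ → ℂ) (z : ℝ) : ℂ :=
  I * k * X2 z + (2 * mu * k ^ 2 - om ^ 2) * Y2 z

def shearPot (mu k : ℂ) (X2 Y2 : ℝ → ℂ) (z : ℝ) : ℂ :=
  X2 z - 2 * I * mu * k * Y2 z

noncomputable def shearPotDeriv (lam mu om k : ℂ) (X1 Y2 : ℝ → ℂ) (z : ℝ) : ℂ :=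
  ((lam + 2 * mu) * k ^ 2 - om ^ 2) * X1 z - I * k * (lam + 2 * mu) * deriv Y2 z

namespace IsReducedLambSystem

variable {lam mu om k p q : ℂ} {h : ℝ} {X1 X2 Y1 Y2 : ℝ → ℂ}

theorem of_mode (hh : 0 < h) (hA : lam + 2 * mu ≠ 0) (hmu : mu ≠ 0)
    (dX1 : Differentiable ℝ X1) (dY1 : Differentiable ℝ Y1) (dY2' : Differentiable ℝ (deriv Y2))
    (hF : ∀ z ∈ Icc (-h) h,
        -(Y1 z) / (lam + 2 * mu) - (lam / (lam + 2 * mu)) * deriv Y2 z = I * k * X1 z ∧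
        (lam / (lam + 2 * mu)) * deriv Y1 z - om ^ 2 * Y2 z
          - (4 * mu * (lam + mu) / (lam + 2 * mu)) * deriv (deriv Y2) z = I * k * X2 z)
    (hG : ∀ z ∈ Icc (-h) h,
        om ^ 2 * X1 z + deriv X2 z = I * k * Y1 z ∧ -(deriv X1 z) + X2 z / mu = I * k * Y2 z) :
    IsReducedLambSystem lam mu om k h X1 X2 Y1 Y2 := by
  have Y1_eq : ∀ z ∈ Icc (-h) h, Y1 z = -((lam + 2 * mu) * I * k * X1 z) - lam * deriv Y2 z := by
    intro z hz
    have e := (hF z hz).1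
    field_simp at e
    linear_combination -e
  have deriv_X1 : ∀ z ∈ Icc (-h) h, mu * deriv X1 z = X2 z - I * k * mu * Y2 z := by
    intro z hz
    have e := (hG z hz).2
    field_simp at e
    linear_combination -e
  have deriv_Y1 : ∀ z ∈ Icc (-h) h,
      deriv Y1 z = -((lam + 2 * mu) * I * k * deriv X1 z) - lam * deriv (deriv Y2) z := by
    intro z hz
    rw [deriv_eq_deriv_of_eqOn_Icc (by linarith) dY1 (((dX1.const_mul _).neg).sub
      (dY2'.const_mul _)) Y1_eq hz]
    exact (((dX1 z).hasDerivAt.const_mul _).neg.sub ((dY2' z).hasDerivAt.const_mul _)).deriv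
  refine ⟨Y1_eq, deriv_X1, fun z hz => ?_, fun z hz => ?_⟩
  · linear_combination (hG z hz).1 + I * k * Y1_eq z hz - (lam + 2 * mu) * k ^ 2 * X1 z * I_sq
  · have e := (hF z hz).2
    rw [deriv_Y1 z hz] at e
    field_simp at e
    refine mul_left_cancel₀ hA ?_
    linear_combination (-mu) * e - (lam + 2 * mu) * lam * I * k * deriv_X1 z hz
      + (lam + 2 * mu) * lam * mu * k ^ 2 * Y2 z * I_sq

theorem isHelmholtzPair_long (hS : IsReducedLambSystem lam mu om k h X1 X2 Y1 Y2)
    (hmu : mu ≠ 0) (hA : lam + 2 * mu ≠ 0) (hp : p ^ 2 = om ^ 2 / (lam + 2 * mu) - k ^ 2)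
    (dX1 : Differentiable ℝ X1) (dX2 : Differentiable ℝ X2) (dY2 : Differentiable ℝ Y2)
    (dY2' : Differentiable ℝ (deriv Y2)) :
    IsHelmholtzPair p h (longPot lam mu k X1 Y2) (longPotDeriv mu om k X2 Y2) := by
  have hp' : (lam + 2 * mu) * p ^ 2 = om ^ 2 - (lam + 2 * mu) * k ^ 2 := by
    rw [hp]; field_simp
  refine ⟨fun z => ?_, fun z => ?_, fun z hz => ?_, fun z hz => ?_⟩
  · exact (((dX1 z).hasDerivAt.const_mul _).add (dY2' z).hasDerivAt).const_mul _
      |>.differentiableAt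
  · exact (((dX2 z).hasDerivAt.const_mul _).add ((dY2 z).hasDerivAt.const_mul _))
      |>.differentiableAt
  · have hd : HasDerivAt (longPot lam mu k X1 Y2)
        ((lam + 2 * mu) * (I * k * deriv X1 z + deriv (deriv Y2) z)) z :=
      (((dX1 z).hasDerivAt.const_mul _).add (dY2' z).hasDerivAt).const_mul _
    refine hd.deriv.trans (mul_left_cancel₀ hmu ?_)
    unfold longPotDeriv
    linear_combination (lam + 2 * mu) * I * k * hS.deriv_X1 z hz + hS.deriv_deriv_Y2 z hz
      - (lam + 2 * mu) * mu * k ^ 2 * Y2 z * I_sq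
  · have hd : HasDerivAt (longPotDeriv mu om k X2 Y2)
        (I * k * deriv X2 z + (2 * mu * k ^ 2 - om ^ 2) * deriv Y2 z) z :=
      ((dX2 z).hasDerivAt.const_mul _).add ((dY2 z).hasDerivAt.const_mul _)
    rw [hd.deriv]
    unfold longPot
    linear_combination I * k * hS.deriv_X2 z hz + (I * k * X1 z + deriv Y2 z) * hp'
      - lam * k ^ 2 * deriv Y2 z * I_sq

theorem isHelmholtzPair_shear (hS : IsReducedLambSystem lam mu om k h X1 X2 Y1 Y2)
    (hmu : mu ≠ 0) (hq : q ^ 2 = om ^ 2 / mu - k ^ 2)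
    (dX1 : Differentiable ℝ X1) (dX2 : Differentiable ℝ X2) (dY2 : Differentiable ℝ Y2)
    (dY2' : Differentiable ℝ (deriv Y2)) :
    IsHelmholtzPair q h (shearPot mu k X2 Y2) (shearPotDeriv lam mu om k X1 Y2) := by
  have hq' : mu * q ^ 2 = om ^ 2 - mu * k ^ 2 := by
    rw [hq]; field_simp
  refine ⟨fun z => ?_, fun z => ?_, fun z hz => ?_, fun z hz => ?_⟩
  · exact ((dX2 z).hasDerivAt.sub ((dY2 z).hasDerivAt.const_mul _)).differentiableAt
  · exact (((dX1 z).hasDerivAt.const_mul _).sub ((dY2' z).hasDerivAt.const_mul _))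
      |>.differentiableAt
  · have hd : HasDerivAt (shearPot mu k X2 Y2)
        (deriv X2 z - 2 * I * mu * k * deriv Y2 z) z :=
      (dX2 z).hasDerivAt.sub ((dY2 z).hasDerivAt.const_mul _)
    rw [hd.deriv]
    unfold shearPotDeriv
    linear_combination hS.deriv_X2 z hz
  · have hd : HasDerivAt (shearPotDeriv lam mu om k X1 Y2)
        (((lam + 2 * mu) * k ^ 2 - om ^ 2) * deriv X1 z
          - I * k * (lam + 2 * mu) * deriv (deriv Y2) z) z :=
      ((dX1 z).hasDerivAt.const_mul _).sub ((dY2' z).hasDerivAt.const_mul _)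
    refine hd.deriv.trans (mul_left_cancel₀ hmu ?_)
    unfold shearPot
    linear_combination ((lam + 2 * mu) * k ^ 2 - om ^ 2) * hS.deriv_X1 z hz
      - I * k * hS.deriv_deriv_Y2 z hz + (X2 z - 2 * I * mu * k * Y2 z) * hq'
      + (lam + mu) * k ^ 2 * X2 z * I_sq

theorem potentials_boundary (hS : IsReducedLambSystem lam mu om k h X1 X2 Y1 Y2)
    (hA : lam + 2 * mu ≠ 0) {z : ℝ} (hz : z ∈ Icc (-h) h) (hX2 : X2 z = 0)
    (hB2 : -(lam / (lam + 2 * mu)) * Y1 z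
      + (4 * mu * (lam + mu) / (lam + 2 * mu)) * deriv Y2 z = 0) :
    -2 * I * mu * k * longPotDeriv mu om k X2 Y2 z
        + (om ^ 2 - 2 * mu * k ^ 2) * shearPot mu k X2 Y2 z = 0 ∧
      (om ^ 2 - 2 * mu * k ^ 2) * longPot lam mu k X1 Y2 z
        - -2 * I * mu * k * shearPotDeriv lam mu om k X1 Y2 z = 0 := by
  have traction : lam * I * k * X1 z + (lam + 2 * mu) * deriv Y2 z = 0 := by
    rw [hS.Y1_eq z hz] at hB2
    field_simp at hB2
    refine mul_left_cancel₀ hA ?_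
    linear_combination hB2
  unfold longPot longPotDeriv shearPot shearPotDeriv
  constructor
  · linear_combination om ^ 2 * hX2 - 2 * mu * k ^ 2 * X2 z * I_sq
  · linear_combination om ^ 2 * traction - 2 * mu * k ^ 2 * (lam + 2 * mu) * deriv Y2 z * I_sq

theorem eq_zero_of_potentials_eq_zero (hS : IsReducedLambSystem lam mu om k h X1 X2 Y1 Y2)
    (hom : om ≠ 0) (hA : lam + 2 * mu ≠ 0) {z : ℝ} (hz : z ∈ Icc (-h) h)
    (hΦ : longPot lam mu k X1 Y2 z = 0) (hφ : longPotDeriv mu om k X2 Y2 z = 0)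
    (hψ : shearPot mu k X2 Y2 z = 0) (hχ : shearPotDeriv lam mu om k X1 Y2 z = 0) :
    X1 z = 0 ∧ X2 z = 0 ∧ Y1 z = 0 ∧ Y2 z = 0 := by
  unfold longPot longPotDeriv shearPot shearPotDeriv at *
  have hom2 : om ^ 2 ≠ 0 := pow_ne_zero 2 hom
  have hX1 : om ^ 2 * X1 z = 0 := by
    linear_combination -I * k * hΦ - hχ + (lam + 2 * mu) * k ^ 2 * X1 z * I_sq
  have hX2 : om ^ 2 * X2 z = 0 := by
    linear_combination -2 * I * mu * k * hφ + (om ^ 2 - 2 * mu * k ^ 2) * hψ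
      + 2 * mu * k ^ 2 * X2 z * I_sq
  have hY2 : om ^ 2 * Y2 z = 0 := by
    linear_combination -hφ + I * k * hψ + 2 * mu * k ^ 2 * Y2 z * I_sq
  have hdY2 : (lam + 2 * mu) * om ^ 2 * deriv Y2 z = 0 := by
    linear_combination -((lam + 2 * mu) * k ^ 2 - om ^ 2) * hΦ + I * k * (lam + 2 * mu) * hχ
      + (lam + 2 * mu) ^ 2 * k ^ 2 * deriv Y2 z * I_sq
  have hX1z := (mul_eq_zero.mp hX1).resolve_left hom2
  have hdY2z := (mul_eq_zero.mp hdY2).resolve_left (mul_ne_zero hA hom2)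
  refine ⟨hX1z, (mul_eq_zero.mp hX2).resolve_left hom2, ?_,
    (mul_eq_zero.mp hY2).resolve_left hom2⟩
  rw [hS.Y1_eq z hz, hX1z, hdY2z]
  ring

end IsReducedLambSystem

theorem rayleighLamb_symmetric_eq_zero_of_sq_eq_neg_sq {p q k : ℂ} (hp : p ^ 2 = -k ^ 2)
    (hq : q ^ 2 = -k ^ 2) (x : ℂ) :
    (q ^ 2 - k ^ 2) ^ 2 * sin (q * x) * cos (p * x)
      + 4 * k ^ 2 * p * q * sin (p * x) * cos (q * x) = 0 := by
  have hpq : (p - q) * (p + q) = 0 := by linear_combination hp - hq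
  rcases mul_eq_zero.mp hpq with h | h
  · rw [sub_eq_zero.mp h]
    linear_combination (q ^ 2 + k ^ 2) * sin (q * x) * cos (q * x) * hq
  · rw [eq_neg_of_add_eq_zero_left h, neg_mul, sin_neg, cos_neg]
    linear_combination (q ^ 2 + k ^ 2) * sin (q * x) * cos (q * x) * hq

theorem rayleighLamb_det_eq {mu om k p q : ℂ} (hmu : mu ≠ 0) (hq : q ^ 2 = om ^ 2 / mu - k ^ 2)
    (x : ℂ) :
    ((om ^ 2 - 2 * mu * k ^ 2) ^ 2 * sin (q * x) * cos (p * x)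
        - (-2 * I * mu * k) ^ 2 * p * q * sin (p * x) * cos (q * x)) *
      ((om ^ 2 - 2 * mu * k ^ 2) ^ 2 * cos (q * x) * sin (p * x)
        - (-2 * I * mu * k) ^ 2 * p * q * cos (p * x) * sin (q * x)) =
    mu ^ 4 * (((q ^ 2 - k ^ 2) ^ 2 * sin (q * x) * cos (p * x)
        + 4 * k ^ 2 * p * q * sin (p * x) * cos (q * x)) *
      ((q ^ 2 - k ^ 2) ^ 2 * cos (q * x) * sin (p * x)
        + 4 * k ^ 2 * p * q * cos (p * x) * sin (q * x))) := by
  have hb : om ^ 2 - 2 * mu * k ^ 2 = mu * (q ^ 2 - k ^ 2) := by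
    rw [hq]; field_simp; ring
  have ha : (-2 * I * mu * k) ^ 2 = -4 * mu ^ 2 * k ^ 2 := by
    linear_combination 4 * mu ^ 2 * k ^ 2 * I_sq
  rw [hb, ha]
  ring

/-- **Lamb modes satisfy the Rayleigh–Lamb equation.** If `(X, Y)` is a nontrivial pair
of C² functions satisfying `F(Y) = ikX`, `G(X) = ikY` on `[-h0, h0]` with boundary
conditions `B₁(X)(±h0) = B₂(Y)(±h0) = 0`, then for any square roots `p, q` of
`ω²/(λ+2μ) − k²` and `ω²/μ − k²`, the wavenumber `k` satisfies the product of the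
symmetric and antisymmetric Rayleigh–Lamb equations. -/
theorem lamb_mode_wavenumber_satisfies_rayleigh_lamb
    (lam mu om h0 : ℝ) (hmu : 0 < mu) (hlm : 0 < lam + 2*mu) (hh : 0 < h0)
    (k : ℂ) (X1 X2 Y1 Y2 : ℝ → ℂ)
    (hX1 : ContDiff ℝ 2 X1) (hX2 : ContDiff ℝ 2 X2)
    (hY1 : ContDiff ℝ 2 Y1) (hY2 : ContDiff ℝ 2 Y2)
    (hnontriv : ¬ (∀ z ∈ Set.Icc (-h0) h0,
        X1 z = 0 ∧ X2 z = 0 ∧ Y1 z = 0 ∧ Y2 z = 0))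
    (hF : ∀ z ∈ Set.Icc (-h0) h0,
        -(Y1 z)/((lam:ℂ)+2*(mu:ℂ)) - ((lam:ℂ)/((lam:ℂ)+2*(mu:ℂ))) * deriv Y2 z
          = Complex.I*k*X1 z
        ∧ ((lam:ℂ)/((lam:ℂ)+2*(mu:ℂ))) * deriv Y1 z - (om:ℂ)^2 * Y2 z
            - ((4*(mu:ℂ)*((lam:ℂ)+(mu:ℂ)))/((lam:ℂ)+2*(mu:ℂ))) * deriv (deriv Y2) z
          = Complex.I*k*X2 z)
    (hG : ∀ z ∈ Set.Icc (-h0) h0,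
        (om:ℂ)^2 * X1 z + deriv X2 z = Complex.I*k*Y1 z
        ∧ -(deriv X1 z) + X2 z/(mu:ℂ) = Complex.I*k*Y2 z)
    (hB1 : X2 h0 = 0 ∧ X2 (-h0) = 0)
    (hB2 : -((lam:ℂ)/((lam:ℂ)+2*(mu:ℂ))) * Y1 h0
            + ((4*(mu:ℂ)*((lam:ℂ)+(mu:ℂ)))/((lam:ℂ)+2*(mu:ℂ))) * deriv Y2 h0 = 0
          ∧ -((lam:ℂ)/((lam:ℂ)+2*(mu:ℂ))) * Y1 (-h0)
            + ((4*(mu:ℂ)*((lam:ℂ)+(mu:ℂ)))/((lam:ℂ)+2*(mu:ℂ))) * deriv Y2 (-h0) = 0) :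
    ∀ p q : ℂ, p^2 = (om:ℂ)^2/((lam:ℂ)+2*(mu:ℂ)) - k^2 → q^2 = (om:ℂ)^2/(mu:ℂ) - k^2 →
      ((q^2-k^2)^2 * Complex.sin (q*h0) * Complex.cos (p*h0)
          + 4*k^2*p*q*Complex.sin (p*h0) * Complex.cos (q*h0))
        * ((q^2-k^2)^2 * Complex.cos (q*h0) * Complex.sin (p*h0)
          + 4*k^2*p*q*Complex.cos (p*h0) * Complex.sin (q*h0)) = 0 := by
  intro p q hp hq
  have hμ : (mu : ℂ) ≠ 0 := ofReal_ne_zero.mpr hmu.ne'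
  have hA : (lam : ℂ) + 2 * mu ≠ 0 := by exact_mod_cast hlm.ne'
  rcases eq_or_ne (om : ℂ) 0 with hom | hom
  · rw [rayleighLamb_symmetric_eq_zero_of_sq_eq_neg_sq (by rw [hp, hom]; ring)
      (by rw [hq, hom]; ring), zero_mul]
  by_contra hRL
  have dX1 := hX1.differentiable two_ne_zero
  have dX2 := hX2.differentiable two_ne_zero
  have dY2 := hY2.differentiable two_ne_zero
  have dY2' := hY2.differentiable_deriv_two
  have hS := IsReducedLambSystem.of_mode hh hA hμ dX1 (hY1.differentiable two_ne_zero) dY2' hF hG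
  refine hnontriv fun z hz => ?_
  obtain ⟨hΦ, hφ, hψ, hχ⟩ := IsHelmholtzPair.eq_zero_of_coupled_boundary
    (hS.isHelmholtzPair_long hμ hA hp dX1 dX2 dY2 dY2')
    (hS.isHelmholtzPair_shear hμ hq dX1 dX2 dY2 dY2') hh.le
    (hS.potentials_boundary hA (right_mem_Icc.2 (by linarith)) hB1.1 hB2.1)
    (hS.potentials_boundary hA (left_mem_Icc.2 (by linarith)) hB1.2 hB2.2)
    (by rw [rayleighLamb_det_eq hμ hq]; exact mul_ne_zero (pow_ne_zero 4 hμ) hRL) hz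
  exact hS.eq_zero_of_potentials_eq_zero hom hA hz hΦ hφ hψ hχ
end
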